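/- arXiv:2212.05403 — 2 statements merged into one kernel-verified Lean document; each statement's English description precedes it below -/
import Mathlib

section
/- The SPO+ loss upper-bounds the regret: for all ĉ, c, we have l_SPO+(ĉ,c) = −min_{w∈S}(2ĉ−c)ᵀw + 2ĉᵀw*(c) − z*(c) ≥ cᵀw*(ĉ) − z*(c). -/
def dot {n : ℕ} (c w : Fin n → ℝ) : ℝ := ∑ i, c i * w i

theorem dot_two_mul_sub_left {n : ℕ} (chat c w : Fin n → ℝ) :
    dot (fun i => 2 * chat i - c i) w = 2 * dot chat w - dot c w := by
  simp only [dot, Finset.mul_sum, ← Finset.sum_sub_distrib]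
  exact Finset.sum_congr rfl fun i _ => by ring

theorem spo_plus_upper_bounds_regret_general {n : ℕ} (S : Set (Fin n → ℝ))
    (c chat : Fin n → ℝ)
    (wc wchat : Fin n → ℝ) (zc zm : ℝ)
    (hwc_mem : wc ∈ S)
    (hzm : IsLeast ((fun w => dot (fun i => 2 * chat i - c i) w) '' S) zm)
    (hwchat_mem : wchat ∈ S) (hwchat_min : ∀ w ∈ S, dot chat wchat ≤ dot chat w) :
    -zm + 2 * dot chat wc - zc ≥ dot c wchat - zc := by
  have hzm_le : zm ≤ 2 * dot chat wc - dot c wchat :=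
    calc zm ≤ dot (fun i => 2 * chat i - c i) wchat := hzm.2 ⟨wchat, hwchat_mem, rfl⟩
      _ = 2 * dot chat wchat - dot c wchat := dot_two_mul_sub_left chat c wchat
      _ ≤ 2 * dot chat wc - dot c wchat := by linarith [hwchat_min wc hwc_mem]
  linarith

/-- SPO+ loss upper-bounds regret:
`−min_{w∈S}(2ĉ−c)ᵀw + 2ĉᵀw*(c) − z*(c) ≥ cᵀw*(ĉ) − z*(c)`. -/
theorem spo_plus_upper_bounds_regret {n : ℕ} (S : Set (Fin n → ℝ)) (hS : S.Nonempty)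
    (hScompact : IsCompact S)
    (c chat : Fin n → ℝ)
    (wc wchat : Fin n → ℝ) (zc zm : ℝ)
    (hwc_mem : wc ∈ S) (hwc_min : ∀ w ∈ S, dot c wc ≤ dot c w)
    (hzc : IsLeast ((fun w => dot c w) '' S) zc)
    (hzm : IsLeast ((fun w => dot (fun i => 2 * chat i - c i) w) '' S) zm)
    (hwchat_mem : wchat ∈ S) (hwchat_min : ∀ w ∈ S, dot chat wchat ≤ dot chat w) :
    -zm + 2 * dot chat wc - zc ≥ dot c wchat - zc :=
  spo_plus_upper_bounds_regret_general S c chat wc wchat zc zm hwc_mem hzm hwchat_mem hwchat_min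
end

section
/- The vector 2(w*(c) − w*(2ĉ−c)) is a subgradient of the SPO+ loss at ĉ: for all c' ∈ ℝⁿ, l_SPO+(c',c) ≥ l_SPO+(ĉ,c) + 2(w*(c) − w*(2ĉ−c))ᵀ(c' − ĉ). -/
/-! The optimal value `z*(v) = vᵀ w*(v)` is a minimum of linear functions of `v`, hence concave,
and `w*(v)` is a supergradient of it at `v`. The SPO+ loss is `-z*(2ĉ - c)` plus a function
linear in `ĉ`, so the chain rule through `ĉ ↦ 2ĉ - c` turns the supergradient `w*(2ĉ - c)`
into the subgradient `2(w*(c) - w*(2ĉ - c))`. -/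

theorem dot_minimizer_le_add {n : ℕ} {S : Set (Fin n → ℝ)} {m : (Fin n → ℝ) → (Fin n → ℝ)}
    (hm_mem : ∀ v, m v ∈ S) (hm_min : ∀ v, ∀ w ∈ S, dot v (m v) ≤ dot v w)
    (v v' : Fin n → ℝ) :
    dot v' (m v') ≤ dot v (m v) + dot (v' - v) (m v) :=
  calc dot v' (m v') ≤ dot v' (m v) := hm_min v' (m v) (hm_mem v)
    _ = dot v (m v) + dot (v' - v) (m v) := by
      simp only [dot, Pi.sub_apply, ← Finset.sum_add_distrib]
      exact Finset.sum_congr rfl fun i _ => by ring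

theorem spo_plus_subgradient_general {n : ℕ} (S : Set (Fin n → ℝ))
    (m : (Fin n → ℝ) → (Fin n → ℝ))
    (hm_mem : ∀ v, m v ∈ S) (hm_min : ∀ v, ∀ w ∈ S, dot v (m v) ≤ dot v w)
    (c chat : Fin n → ℝ) :
    ∀ c' : Fin n → ℝ,
      (-(dot (fun i => 2 * c' i - c i) (m (fun i => 2 * c' i - c i)))
          + 2 * dot c' (m c) - dot c (m c))
      ≥ (-(dot (fun i => 2 * chat i - c i) (m (fun i => 2 * chat i - c i)))
          + 2 * dot chat (m c) - dot c (m c))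
        + dot (fun i => 2 * (m c i - m (fun i => 2 * chat i - c i) i))
            (fun i => c' i - chat i) := by
  intro c'
  set v := fun i => 2 * chat i - c i
  set v' := fun i => 2 * c' i - c i
  have hsuper := dot_minimizer_le_add hm_mem hm_min v v'
  have hlinear : dot (v' - v) (m v) + dot (fun i => 2 * (m c i - m v i)) (fun i => c' i - chat i)
      = 2 * dot c' (m c) - 2 * dot chat (m c) := by
    simp only [v, v', dot, Pi.sub_apply, Finset.mul_sum, ← Finset.sum_add_distrib,
      ← Finset.sum_sub_distrib]
    exact Finset.sum_congr rfl fun i _ => by ring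
  linarith

/-- `2(w*(c) − w*(2ĉ−c))` is a subgradient of the SPO+ loss at `ĉ`:
for all `c'`, `l_SPO+(c',c) ≥ l_SPO+(ĉ,c) + 2(w*(c) − w*(2ĉ−c))ᵀ(c' − ĉ)`.
Here `m v` denotes a chosen minimizer of `vᵀw` over `S`, and `wc = m c`. -/
theorem spo_plus_subgradient {n : ℕ} (S : Set (Fin n → ℝ)) (hS : S.Nonempty)
    (hScompact : IsCompact S)
    (m : (Fin n → ℝ) → (Fin n → ℝ))
    (hm_mem : ∀ v, m v ∈ S) (hm_min : ∀ v, ∀ w ∈ S, dot v (m v) ≤ dot v w)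
    (c chat : Fin n → ℝ) :
    ∀ c' : Fin n → ℝ,
      (-(dot (fun i => 2 * c' i - c i) (m (fun i => 2 * c' i - c i)))
          + 2 * dot c' (m c) - dot c (m c))
      ≥ (-(dot (fun i => 2 * chat i - c i) (m (fun i => 2 * chat i - c i)))
          + 2 * dot chat (m c) - dot c (m c))
        + dot (fun i => 2 * (m c i - m (fun i => 2 * chat i - c i) i))
            (fun i => c' i - chat i) :=
  spo_plus_subgradient_general S m hm_mem hm_min c chat
end
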